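/- arXiv:2110.02505 — 4 statements merged into one kernel-verified Lean document; each statement's English description precedes it below -/
import Mathlib

section
/- For a bounded linear operator A on a complex Hilbert space, (1/4)‖A*A + AA*‖ ≤ w(A)² ≤ (1/2)‖A*A + AA*‖. -/
open ContinuousLinearMap in
noncomputable def numRad {E : Type*} [NormedAddCommGroup E] [InnerProductSpace ℂ E]
    (T : E →L[ℂ] E) : ℝ :=
  ⨆ x : {x : E // ‖x‖ = 1}, ‖(inner ℂ (T x) (x : E) : ℂ)‖

variable {H : Type*} [NormedAddCommGroup H] [InnerProductSpace ℂ H] [CompleteSpace H]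

/-- `|A| = (A*A)^{1/2}`, the positive square root of `A*A`. -/
noncomputable def absOp (A : H →L[ℂ] H) : H →L[ℂ] H :=
  CFC.sqrt (ContinuousLinearMap.adjoint A * A)

/-- real part of an operator -/
noncomputable def reOp (A : H →L[ℂ] H) : H →L[ℂ] H :=
  (1 / 2 : ℂ) • (A + ContinuousLinearMap.adjoint A)

/-- imaginary part of an operator -/
noncomputable def imOp (A : H →L[ℂ] H) : H →L[ℂ] H :=
  (1 / (2 * Complex.I) : ℂ) • (A - ContinuousLinearMap.adjoint A)

/-- the block diagonal operator `diag(A,B)` on `H ⊕ H` (ℓ²-sum). -/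
noncomputable def blockDiag (A B : H →L[ℂ] H) :
    WithLp 2 (H × H) →L[ℂ] WithLp 2 (H × H) :=
  ((WithLp.prodContinuousLinearEquiv 2 ℂ H H).symm.toContinuousLinearMap).comp
    ((A.prodMap B).comp (WithLp.prodContinuousLinearEquiv 2 ℂ H H).toContinuousLinearMap)

/-- the off-diagonal block operator `[[O,A],[B,O]] : (x,y) ↦ (A y, B x)` on `H ⊕ H`. -/
noncomputable def blockOffDiag (A B : H →L[ℂ] H) :
    WithLp 2 (H × H) →L[ℂ] WithLp 2 (H × H) :=
  ((WithLp.prodContinuousLinearEquiv 2 ℂ H H).symm.toContinuousLinearMap).comp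
    (((A.prodMap B).comp (ContinuousLinearEquiv.prodComm ℂ H H).toContinuousLinearMap).comp
      (WithLp.prodContinuousLinearEquiv 2 ℂ H H).toContinuousLinearMap)

/-!
Write `A = R + iJ` with `R = ℜ A` and `J = ℑ A` self-adjoint. Then `A*A + AA* = 2 (R² + J²)`,
and the real and imaginary parts of `⟪A x, x⟫` are, up to sign, `⟪R x, x⟫` and `⟪J x, x⟫`.
Since the norm of a self-adjoint operator is the supremum of its quadratic form on the unit
sphere, `‖R‖, ‖J‖ ≤ w(A)`, whence `‖R² + J²‖ ≤ 2 w(A)²`. Conversely, for a unit vector `x`,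
`|⟪A x, x⟫|² ≤ ‖R x‖² + ‖J x‖² = re ⟪(R² + J²) x, x⟫ ≤ ‖R² + J²‖`.
-/

section NumericalRadius

variable {E : Type*} [NormedAddCommGroup E] [InnerProductSpace ℂ E]

lemma numRad_nonneg (T : E →L[ℂ] E) : 0 ≤ numRad T :=
  Real.iSup_nonneg fun _ ↦ norm_nonneg _

lemma norm_inner_apply_self_le_numRad_mul (T : E →L[ℂ] E) (x : E) :
    ‖inner ℂ (T x) x‖ ≤ numRad T * ‖x‖ ^ 2 := by
  obtain rfl | hx := eq_or_ne x 0
  · simp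
  have hbdd : BddAbove (Set.range fun u : {u : E // ‖u‖ = 1} ↦ ‖inner ℂ (T u) (u : E)‖) :=
    ⟨‖T‖, by
      rintro _ ⟨⟨u, hu⟩, rfl⟩
      calc ‖inner ℂ (T u) u‖ ≤ ‖T u‖ * ‖u‖ := norm_inner_le_norm _ _
        _ ≤ ‖T‖ := by simpa [hu] using T.le_opNorm u⟩
  have hu := le_ciSup hbdd ⟨(‖x‖⁻¹ : ℂ) • x, norm_smul_inv_norm hx⟩
  simp only [map_smul, inner_smul_left, inner_smul_right, norm_mul, RCLike.norm_conj,
    norm_inv, Complex.norm_real, norm_norm] at hu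
  rw [← mul_assoc, ← sq, inv_pow, inv_mul_le_iff₀ (by positivity)] at hu
  rwa [mul_comm] at hu

end NumericalRadius

lemma ContinuousLinearMap.norm_le_of_abs_re_inner_le {𝕜 E : Type*} [RCLike 𝕜]
    [NormedAddCommGroup E] [InnerProductSpace 𝕜 E] {T : E →L[𝕜] E} (hT : T.IsSymmetric)
    {M : ℝ} (hM : 0 ≤ M) (h : ∀ x, |RCLike.re (inner 𝕜 (T x) x)| ≤ M * ‖x‖ ^ 2) :
    ‖T‖ ≤ M := by
  rw [T.norm_eq_iSup_rayleighQuotient hT]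
  refine ciSup_le fun x ↦ ?_
  obtain rfl | hx := eq_or_ne x 0
  · simpa using hM
  rw [rayleighQuotient, reApplyInnerSelf_apply, abs_div, abs_sq,
    div_le_iff₀ (by positivity)]
  exact h x

open ComplexStarModule

section RealImaginaryParts

variable (A : H →L[ℂ] H) (x : H)

lemma re_inner_realPart_apply_self :
    (inner ℂ ((ℜ A : H →L[ℂ] H) x) x).re = (inner ℂ (A x) x).re := by
  have hJ : (inner ℂ ((ℑ A : H →L[ℂ] H) x) x).im = 0 :=
    (ℑ A).2.isSymmetric.im_inner_apply_self x
  conv_rhs => rw [← realPart_add_I_smul_imaginaryPart A]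
  simp [hJ]

lemma re_inner_imaginaryPart_apply_self :
    (inner ℂ ((ℑ A : H →L[ℂ] H) x) x).re = -(inner ℂ (A x) x).im := by
  have hR : (inner ℂ ((ℜ A : H →L[ℂ] H) x) x).im = 0 :=
    (ℜ A).2.isSymmetric.im_inner_apply_self x
  conv_rhs => rw [← realPart_add_I_smul_imaginaryPart A]
  simp [hR]

lemma sq_norm_inner_apply_self_le :
    ‖inner ℂ (A x) x‖ ^ 2
      ≤ (‖(ℜ A : H →L[ℂ] H) x‖ ^ 2 + ‖(ℑ A : H →L[ℂ] H) x‖ ^ 2) * ‖x‖ ^ 2 := by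
  have cauchySchwarz (y : H) : (inner ℂ y x).re ^ 2 ≤ ‖y‖ ^ 2 * ‖x‖ ^ 2 := by
    rw [← mul_pow, ← sq_abs]
    exact pow_le_pow_left₀ (abs_nonneg _)
      ((Complex.abs_re_le_norm _).trans (norm_inner_le_norm _ _)) 2
  have hR := cauchySchwarz ((ℜ A : H →L[ℂ] H) x)
  have hJ := cauchySchwarz ((ℑ A : H →L[ℂ] H) x)
  rw [re_inner_realPart_apply_self] at hR
  rw [re_inner_imaginaryPart_apply_self, neg_sq] at hJ
  rw [Complex.sq_norm, Complex.normSq_apply, add_mul]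
  nlinarith

lemma sq_norm_realPart_apply_add_sq_norm_imaginaryPart_apply :
    ‖(ℜ A : H →L[ℂ] H) x‖ ^ 2 + ‖(ℑ A : H →L[ℂ] H) x‖ ^ 2
      = (inner ℂ (((ℜ A : H →L[ℂ] H) * ℜ A + ℑ A * ℑ A) x) x).re := by
  rw [ContinuousLinearMap.apply_norm_sq_eq_inner_adjoint_left,
    ContinuousLinearMap.apply_norm_sq_eq_inner_adjoint_left,
    (ℜ A).2.adjoint_eq, (ℑ A).2.adjoint_eq, add_apply, inner_add_left, Complex.add_re]
  rfl

lemma norm_realPart_le_numRad : ‖(ℜ A : H →L[ℂ] H)‖ ≤ numRad A :=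
  ContinuousLinearMap.norm_le_of_abs_re_inner_le (ℜ A).2.isSymmetric (numRad_nonneg A)
    fun x ↦ by
      rw [RCLike.re_to_complex, re_inner_realPart_apply_self]
      exact (Complex.abs_re_le_norm _).trans (norm_inner_apply_self_le_numRad_mul A x)

lemma norm_imaginaryPart_le_numRad : ‖(ℑ A : H →L[ℂ] H)‖ ≤ numRad A :=
  ContinuousLinearMap.norm_le_of_abs_re_inner_le (ℑ A).2.isSymmetric (numRad_nonneg A)
    fun x ↦ by
      rw [RCLike.re_to_complex, re_inner_imaginaryPart_apply_self, abs_neg]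
      exact (Complex.abs_im_le_norm _).trans (norm_inner_apply_self_le_numRad_mul A x)

lemma numRad_sq_le_norm_realPart_sq_add_imaginaryPart_sq :
    numRad A ^ 2 ≤ ‖(ℜ A : H →L[ℂ] H) * ℜ A + ℑ A * ℑ A‖ := by
  set D : H →L[ℂ] H := (ℜ A : H →L[ℂ] H) * ℜ A + ℑ A * ℑ A
  rw [← Real.le_sqrt (numRad_nonneg A) (norm_nonneg D)]
  refine Real.iSup_le (fun ⟨x, hx⟩ ↦ ?_) (Real.sqrt_nonneg _)
  rw [Real.le_sqrt (norm_nonneg _) (norm_nonneg D)]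
  calc ‖inner ℂ (A x) x‖ ^ 2
      ≤ (‖(ℜ A : H →L[ℂ] H) x‖ ^ 2 + ‖(ℑ A : H →L[ℂ] H) x‖ ^ 2) * ‖x‖ ^ 2 :=
        sq_norm_inner_apply_self_le A x
    _ = (inner ℂ (D x) x).re := by
        rw [hx, one_pow, mul_one, sq_norm_realPart_apply_add_sq_norm_imaginaryPart_apply]
    _ ≤ ‖D x‖ * ‖x‖ := re_inner_le_norm (𝕜 := ℂ) _ _
    _ ≤ ‖D‖ := by simpa [hx] using D.le_opNorm x

end RealImaginaryParts

theorem kittaneh_ineq (A : H →L[ℂ] H) :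
    (1 / 4) * ‖ContinuousLinearMap.adjoint A * A + A * ContinuousLinearMap.adjoint A‖
      ≤ numRad A ^ 2 ∧
    numRad A ^ 2
      ≤ (1 / 2) * ‖ContinuousLinearMap.adjoint A * A + A * ContinuousLinearMap.adjoint A‖ := by
  set R : H →L[ℂ] H := ↑(ℜ A)
  set J : H →L[ℂ] H := ↑(ℑ A)
  have hsum : ‖ContinuousLinearMap.adjoint A * A + A * ContinuousLinearMap.adjoint A‖
      = 2 * ‖R * R + J * J‖ := by
    rw [← ContinuousLinearMap.star_eq_adjoint, star_mul_self_add_self_mul_star, RCLike.norm_nsmul ℂ,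
      nsmul_eq_mul, Nat.cast_ofNat]
  have hlower : ‖R * R + J * J‖ ≤ 2 * numRad A ^ 2 :=
    calc ‖R * R + J * J‖ ≤ ‖R‖ * ‖R‖ + ‖J‖ * ‖J‖ :=
          (norm_add_le _ _).trans (add_le_add (norm_mul_le _ _) (norm_mul_le _ _))
      _ ≤ numRad A * numRad A + numRad A * numRad A :=
          add_le_add (mul_self_le_mul_self (norm_nonneg R) (norm_realPart_le_numRad A))
            (mul_self_le_mul_self (norm_nonneg J) (norm_imaginaryPart_le_numRad A))
      _ = 2 * numRad A ^ 2 := by ring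
  constructor <;> linarith [numRad_sq_le_norm_realPart_sq_add_imaginaryPart_sq A]
end

section
/- For a bounded linear operator A on a complex Hilbert space, w(A) ≤ (1/2)(‖A‖ + ‖A²‖^{1/2}). -/
variable {H : Type*} [NormedAddCommGroup H] [InnerProductSpace ℂ H] [CompleteSpace H]

/-!
For a unit vector `x`, rotating `A` by a unimodular scalar `c` makes `⟪(c • A) x, x⟫` real and
nonnegative, so `2 |⟪A x, x⟫| ≤ ‖B + B⋆‖` with `B = c • A`. By the C⋆-identity
`‖B + B⋆‖² = ‖(B + B⋆)²‖`, and `(B + B⋆)² = (B⋆B + BB⋆) + B² + (B²)⋆`. The positive part is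
handled by `‖X⋆X + Y⋆Y‖ ≤ max ‖X‖² ‖Y‖² + ‖Y X⋆‖` (with `X = B`, `Y = B⋆`), which gives
`‖B + B⋆‖² ≤ ‖A‖² + 3 ‖A²‖`. Finally `‖A‖² + 3 ‖A²‖ ≤ (‖A‖ + ‖A²‖^{1/2})²` because `‖A²‖ ≤ ‖A‖²`.
-/

open scoped InnerProductSpace

lemma CStarRing.norm_add_star_sq_le {E : Type*} [NonUnitalNormedRing E] [StarRing E] [CStarRing E]
    (b : E) : ‖b + star b‖ ^ 2 ≤ ‖star b * b + b * star b‖ + 2 * ‖b * b‖ := by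
  have hsq : (b + star b) * (b + star b) = (star b * b + b * star b) + (b * b + star (b * b)) := by
    rw [star_mul]; noncomm_ring
  rw [← (IsSelfAdjoint.add_star_self b).norm_mul_self, hsq]
  calc _ ≤ ‖star b * b + b * star b‖ + (‖b * b‖ + ‖star (b * b)‖) :=
        (norm_add_le _ _).trans (by gcongr; exact norm_add_le _ _)
    _ = _ := by rw [norm_star]; ring

lemma le_add_sqrt_of_sq_le {r a b : ℝ} (ha : 0 ≤ a) (hb : 0 ≤ b) (hba : b ≤ a ^ 2)
    (h : r ^ 2 ≤ a ^ 2 + 3 * b) : r ≤ a + √b := by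
  have hsb : √b ≤ a := (Real.sqrt_le_left ha).2 hba
  refine le_of_sq_le_sq ?_ (by positivity)
  nlinarith [Real.sq_sqrt hb, Real.sqrt_nonneg b]

namespace ContinuousLinearMap

variable {𝕜 E : Type*} [RCLike 𝕜] [NormedAddCommGroup E] [InnerProductSpace 𝕜 E] [CompleteSpace E]

lemma norm_star_apply_add_star_apply_sq_le (X Y : E →L[𝕜] E) (x y : E) :
    ‖star X x + star Y y‖ ^ 2 ≤
      max (‖X‖ ^ 2) (‖Y‖ ^ 2) * (‖x‖ ^ 2 + ‖y‖ ^ 2) + 2 * ‖Y * star X‖ * ‖x‖ * ‖y‖ := by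
  have hX : ‖star X x‖ ^ 2 ≤ ‖X‖ ^ 2 * ‖x‖ ^ 2 := by
    rw [← mul_pow, ← norm_star X]
    gcongr
    exact (star X).le_opNorm x
  have hY : ‖star Y y‖ ^ 2 ≤ ‖Y‖ ^ 2 * ‖y‖ ^ 2 := by
    rw [← mul_pow, ← norm_star Y]
    gcongr
    exact (star Y).le_opNorm y
  have hXY : RCLike.re ⟪star X x, star Y y⟫_𝕜 ≤ ‖Y * star X‖ * ‖x‖ * ‖y‖ := by
    rw [star_eq_adjoint Y, adjoint_inner_right]
    calc _ ≤ ‖(Y * star X) x‖ * ‖y‖ := (RCLike.re_le_norm _).trans (norm_inner_le_norm _ _)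
      _ ≤ _ := by gcongr; exact (Y * star X).le_opNorm x
  rw [norm_add_sq (𝕜 := 𝕜)]
  nlinarith [le_max_left (‖X‖ ^ 2) (‖Y‖ ^ 2), le_max_right (‖X‖ ^ 2) (‖Y‖ ^ 2),
    sq_nonneg ‖x‖, sq_nonneg ‖y‖]

lemma norm_star_mul_self_add_star_mul_self_le (X Y : E →L[𝕜] E) :
    ‖star X * X + star Y * Y‖ ≤ max (‖X‖ ^ 2) (‖Y‖ ^ 2) + ‖Y * star X‖ := by
  set P := star X * X + star Y * Y
  set C := max (‖X‖ ^ 2) (‖Y‖ ^ 2) + ‖Y * star X‖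
  refine P.opNorm_le_bound (by positivity) fun z => ?_
  have hPz : P z = star X (X z) + star Y (Y z) := rfl
  have hform : RCLike.re ⟪P z, z⟫_𝕜 = ‖X z‖ ^ 2 + ‖Y z‖ ^ 2 := by
    simp only [hPz, inner_add_left, map_add, star_eq_adjoint, adjoint_inner_left,
      inner_self_eq_norm_sq]
  have hsq : ‖P z‖ ^ 2 ≤ C * (‖P z‖ * ‖z‖) :=
    calc ‖P z‖ ^ 2 ≤ C * (‖X z‖ ^ 2 + ‖Y z‖ ^ 2) := by
          rw [hPz]
          refine (norm_star_apply_add_star_apply_sq_le X Y _ _).trans ?_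
          nlinarith [sq_nonneg (‖X z‖ - ‖Y z‖), norm_nonneg (Y * star X)]
      _ ≤ C * (‖P z‖ * ‖z‖) := by
          rw [← hform]
          gcongr
          exact (RCLike.re_le_norm _).trans (norm_inner_le_norm _ _)
  rcases (norm_nonneg (P z)).eq_or_lt with h | h
  · rw [← h]; positivity
  · nlinarith

lemma norm_add_star_sq_le (B : E →L[𝕜] E) : ‖B + star B‖ ^ 2 ≤ ‖B‖ ^ 2 + 3 * ‖B * B‖ := by
  have hsum := norm_star_mul_self_add_star_mul_self_le B (star B)
  rw [star_star, ← star_mul, norm_star B, norm_star (B * B), max_self] at hsum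
  linarith [CStarRing.norm_add_star_sq_le B]

lemma exists_two_mul_norm_inner_le_norm_smul_add_star (A : E →L[𝕜] E) {x : E} (hx : ‖x‖ = 1) :
    ∃ c : 𝕜, ‖c‖ = 1 ∧ 2 * ‖⟪A x, x⟫_𝕜‖ ≤ ‖c • A + star (c • A)‖ := by
  obtain ⟨c, hc, hcw⟩ := RCLike.exists_norm_eq_mul_self ⟪A x, x⟫_𝕜
  refine ⟨starRingEnd 𝕜 c, by rwa [RCLike.norm_conj], ?_⟩
  set R := starRingEnd 𝕜 c • A + star (starRingEnd 𝕜 c • A)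
  have hinner : ⟪R x, x⟫_𝕜 = 2 * ‖⟪A x, x⟫_𝕜‖ := by
    rw [add_apply, inner_add_left, star_eq_adjoint, adjoint_inner_left, ← inner_conj_symm x,
      smul_apply, inner_smul_left, RCLike.conj_conj, ← hcw, RCLike.conj_ofReal]
    ring
  calc 2 * ‖⟪A x, x⟫_𝕜‖ = ‖⟪R x, x⟫_𝕜‖ := by
        rw [hinner, norm_mul, RCLike.norm_ofReal, abs_norm, RCLike.norm_two]
    _ ≤ ‖R x‖ := (norm_inner_le_norm _ _).trans_eq (by rw [hx, mul_one])
    _ ≤ ‖R‖ := (R.le_opNorm x).trans_eq (by rw [hx, mul_one])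

end ContinuousLinearMap

theorem kittaneh_norm_ineq (A : H →L[ℂ] H) :
    numRad A ≤ (1 / 2) * (‖A‖ + Real.sqrt ‖A * A‖) := by
  refine Real.iSup_le (fun x => ?_) (by positivity)
  obtain ⟨c, hc, hx⟩ := A.exists_two_mul_norm_inner_le_norm_smul_add_star x.2
  have hsq : ‖c • A + star (c • A)‖ ^ 2 ≤ ‖A‖ ^ 2 + 3 * ‖A * A‖ := by
    simpa [norm_smul, hc, smul_mul_smul] using (c • A).norm_add_star_sq_le
  have hbound := le_add_sqrt_of_sq_le (norm_nonneg A) (norm_nonneg (A * A))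
    ((norm_mul_le A A).trans_eq (sq _).symm) hsq
  linarith
end

section
/- If A is a positive bounded linear operator on a complex Hilbert space and r ≥ 1, then for every unit vector x, ⟨Ax,x⟩^r ≤ ⟨A^r x,x⟩ (McCarthy's inequality). -/
/-!
The function `t ↦ t ^ r` is convex on `[0, ∞)`, so it lies above its tangent line at
`c = re ⟪A x, x⟫`. Monotonicity of the continuous functional calculus transfers this to
`A ^ r ≥ c ^ r + r c ^ (r - 1) (A - c)`, and evaluating both sides in the unit vector `x`
makes the right-hand side collapse to `c ^ r`.
-/

open scoped InnerProductSpace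

theorem Real.rpow_add_mul_sub_le_rpow {c t r : ℝ} (hc : 0 ≤ c) (ht : 0 ≤ t) (hr : 1 ≤ r) :
    c ^ r + r * c ^ (r - 1) * (t - c) ≤ t ^ r := by
  rcases hc.eq_or_lt with rfl | hc
  -- at `c = 0` the slope `r * 0 ^ (r - 1)` is `1` for `r = 1` (as `0 ^ 0 = 1`) and `0` otherwise
  · rcases hr.eq_or_lt with rfl | hr
    · simp
    · simp [Real.zero_rpow (by linarith : r ≠ 0), Real.zero_rpow (by linarith : r - 1 ≠ 0)]
      positivity
  · have bernoulli := one_add_mul_self_le_rpow_one_add (s := t / c - 1) (by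
      have : 0 ≤ t / c := by positivity
      linarith) hr
    rw [add_sub_cancel, Real.div_rpow ht hc.le] at bernoulli
    have hcr : c ^ (r - 1) = c ^ r / c := by rw [Real.rpow_sub hc, Real.rpow_one]
    have hcr0 : 0 < c ^ r := by positivity
    calc c ^ r + r * c ^ (r - 1) * (t - c) = c ^ r * (1 + r * (t / c - 1)) := by
          rw [hcr]; field_simp
      _ ≤ c ^ r * (t ^ r / c ^ r) := by gcongr
      _ = t ^ r := by field_simp

namespace CFC

variable {A : Type*} [PartialOrder A] [Ring A] [StarRing A] [TopologicalSpace A]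
  [StarOrderedRing A] [Algebra ℝ A] [ContinuousFunctionalCalculus ℝ A IsSelfAdjoint]
  [NonnegSpectrumClass ℝ A] [IsSemitopologicalRing A] [T2Space A]

theorem rpow_add_smul_sub_le_rpow {a : A} (ha : 0 ≤ a) {c r : ℝ} (hc : 0 ≤ c) (hr : 1 ≤ r) :
    algebraMap ℝ A (c ^ r) + (r * c ^ (r - 1)) • (a - algebraMap ℝ A c) ≤ a ^ r := by
  have htangent : cfc (fun t : ℝ => c ^ r + r * c ^ (r - 1) * (t - c)) a =
      algebraMap ℝ A (c ^ r) + (r * c ^ (r - 1)) • (a - algebraMap ℝ A c) := by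
    rw [cfc_add .., cfc_const_mul .., cfc_sub .., cfc_const .., cfc_const .., cfc_id' ..]
  rw [← htangent, rpow_eq_cfc_real ha]
  refine cfc_mono (fun t ht => Real.rpow_add_mul_sub_le_rpow hc ?_ hr) (hg := ?_)
  · exact spectrum_nonneg_of_nonneg ha ht
  · exact (Real.continuous_rpow_const (by linarith)).continuousOn

end CFC

theorem ContinuousLinearMap.re_inner_le_re_inner_of_le {𝕜 E : Type*} [RCLike 𝕜]
    [NormedAddCommGroup E] [InnerProductSpace 𝕜 E] {S T : E →L[𝕜] E} (h : S ≤ T) (x : E) :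
    RCLike.re ⟪S x, x⟫_𝕜 ≤ RCLike.re ⟪T x, x⟫_𝕜 := by
  have := h.re_inner_nonneg_left x
  rwa [sub_apply, inner_sub_left, map_sub, sub_nonneg] at this

theorem mccarthy_inequality {H : Type*} [NormedAddCommGroup H] [InnerProductSpace ℂ H]
    [CompleteSpace H] (A : H →L[ℂ] H) (hA : A.IsPositive) (r : ℝ) (hr : 1 ≤ r)
    (x : H) (hx : ‖x‖ = 1) :
    (inner ℂ (A x) x : ℂ).re ^ r ≤ (inner ℂ ((CFC.rpow A r) x) x : ℂ).re := by
  set c := (inner ℂ (A x) x : ℂ).re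
  have hc : 0 ≤ c := hA.re_inner_nonneg_left x
  have tangent := CFC.rpow_add_smul_sub_le_rpow (A.nonneg_iff_isPositive.mpr hA) hc hr
  calc c ^ r
      = RCLike.re ⟪(algebraMap ℝ _ (c ^ r) + (r * c ^ (r - 1)) • (A - algebraMap ℝ _ c)) x,
          x⟫_ℂ := by
        simp only [← Complex.coe_smul, Algebra.algebraMap_eq_smul_one]
        simp [inner_self_eq_norm_sq_to_K, hx, c]
    _ ≤ _ := ContinuousLinearMap.re_inner_le_re_inner_of_le tangent x
end

section
/- For vectors x, y, e in a complex Hilbert space with ‖e‖ = 1, |⟨x,e⟩⟨e,y⟩| ≤ (1/2)(‖x‖‖y‖ + |⟨x,y⟩|) (Buzano's inequality). -/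
/-!
Let `R` be the reflection in the line through the unit vector `e`, so `R y = 2⟪e, y⟫e - y`.
Then `2⟪x, e⟫⟪e, y⟫ = ⟪x, y⟫ + ⟪x, R y⟫`, and since `R` is an isometry, Cauchy–Schwarz bounds
`‖⟪x, R y⟫‖` by `‖x‖‖y‖`.
-/

open Submodule

section

variable {𝕜 E : Type*} [RCLike 𝕜] [NormedAddCommGroup E] [InnerProductSpace 𝕜 E]

local notation "⟪" x ", " y "⟫" => inner 𝕜 x y

theorem reflection_span_unit_singleton_apply {e : E} (he : ‖e‖ = 1) (y : E) :
    (𝕜 ∙ e).reflection y = (2 : 𝕜) • ⟪e, y⟫ • e - y := by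
  rw [reflection_apply, starProjection_unit_singleton 𝕜 he, two_smul, two_smul]

theorem two_mul_inner_mul_inner_eq_add_inner_reflection {e : E} (he : ‖e‖ = 1) (x y : E) :
    2 * (⟪x, e⟫ * ⟪e, y⟫) = ⟪x, y⟫ + ⟪x, (𝕜 ∙ e).reflection y⟫ := by
  rw [reflection_span_unit_singleton_apply he, inner_sub_right, inner_smul_right,
    inner_smul_right]
  ring

theorem norm_inner_mul_inner_le {e : E} (he : ‖e‖ = 1) (x y : E) :
    ‖⟪x, e⟫ * ⟪e, y⟫‖ ≤ (‖x‖ * ‖y‖ + ‖⟪x, y⟫‖) / 2 := by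
  have hreflect : ‖⟪x, (𝕜 ∙ e).reflection y⟫‖ ≤ ‖x‖ * ‖y‖ := by
    simpa only [LinearIsometryEquiv.norm_map] using norm_inner_le_norm x ((𝕜 ∙ e).reflection y)
  have htwice : 2 * ‖⟪x, e⟫ * ⟪e, y⟫‖ ≤ ‖⟪x, y⟫‖ + ‖x‖ * ‖y‖ :=
    calc 2 * ‖⟪x, e⟫ * ⟪e, y⟫‖
        = ‖(2 : 𝕜) * (⟪x, e⟫ * ⟪e, y⟫)‖ := by rw [norm_mul (2 : 𝕜), RCLike.norm_two]
      _ = ‖⟪x, y⟫ + ⟪x, (𝕜 ∙ e).reflection y⟫‖ := by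
        rw [two_mul_inner_mul_inner_eq_add_inner_reflection he]
      _ ≤ ‖⟪x, y⟫‖ + ‖x‖ * ‖y‖ := (norm_add_le _ _).trans (by gcongr)
  linarith

end

theorem buzano_inequality {H : Type*} [NormedAddCommGroup H] [InnerProductSpace ℂ H]
    (x y e : H) (he : ‖e‖ = 1) :
    ‖(inner ℂ x e : ℂ) * (inner ℂ e y : ℂ)‖ ≤ (1 / 2) * (‖x‖ * ‖y‖ + ‖(inner ℂ x y : ℂ)‖) := by
  rw [one_div_mul_eq_div]
  exact norm_inner_mul_inner_le he x y
end
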